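/- The q-series p_1 := (1/7)(J_{14}J_1^7/(J_7 J_2^7) - 8) has integer coefficients; equivalently, every coefficient of the formal power series J_{14}J_1^7/(J_7 J_2^7) - 8 is divisible by 7. -/

import Mathlib

open PowerSeries Finset

/-- `J_k = (q^k;q^k)_∞` as a formal power series over `ℚ`. -/
noncomputable def J (k : ℕ) : PowerSeries ℚ :=
  PowerSeries.mk fun m =>
    PowerSeries.coeff (R := ℚ) m
      (∏ n ∈ Finset.range (m + 1), (1 - (PowerSeries.X : PowerSeries ℚ) ^ (k * (n + 1))))

variable {R : Type*} [CommRing R]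

noncomputable def Pp (R : Type*) [CommRing R] (k N : ℕ) : PowerSeries R :=
  ∏ n ∈ Finset.range N, (1 - (X : PowerSeries R) ^ (k * (n + 1)))

lemma coeff_mul_one_sub_X_pow (f : PowerSeries R) {m d : ℕ} (h : m < d) :
    coeff (R := R) m (f * (1 - X ^ d)) = coeff (R := R) m f := by
  rw [mul_sub, mul_one, map_sub, coeff_mul_X_pow', if_neg (by omega)]
  ring

lemma Pp_coeff_stable {k m N N' : ℕ} (hk : 1 ≤ k) (hm : m < N) (hN : N ≤ N') :
    coeff (R := R) m (Pp R k N') = coeff (R := R) m (Pp R k N) := by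
  induction N', hN using Nat.le_induction with
  | base => rfl
  | succ N' hN ih =>
    rw [Pp, Finset.prod_range_succ, coeff_mul_one_sub_X_pow _ (by nlinarith), ← Pp, ih]

noncomputable def Jz (k : ℕ) : PowerSeries ℤ :=
  PowerSeries.mk fun m => coeff (R := ℤ) m (Pp ℤ k (m + 1))

lemma Jz_coeff {k m N : ℕ} (hk : 1 ≤ k) (hm : m < N) :
    coeff (R := ℤ) m (Jz k) = coeff (R := ℤ) m (Pp ℤ k N) := by
  rw [Jz, coeff_mk, ← Pp_coeff_stable hk (Nat.lt_succ_self m) (le_max_left (m+1) N),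
    Pp_coeff_stable hk hm (le_max_right (m+1) N)]

lemma coeff_mul_congr {f f' g g' : PowerSeries R} {m : ℕ}
    (hf : ∀ i ≤ m, coeff (R := R) i f = coeff (R := R) i f')
    (hg : ∀ i ≤ m, coeff (R := R) i g = coeff (R := R) i g') :
    ∀ i ≤ m, coeff (R := R) i (f * g) = coeff (R := R) i (f' * g') := by
  intro i hi
  rw [coeff_mul, coeff_mul]
  refine Finset.sum_congr rfl fun p hp => ?_
  rw [Finset.HasAntidiagonal.mem_antidiagonal] at hp
  rw [hf p.1 (by omega), hg p.2 (by omega)]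

lemma coeff_pow_congr {f f' : PowerSeries R} {m : ℕ}
    (hf : ∀ i ≤ m, coeff (R := R) i f = coeff (R := R) i f') (e : ℕ) :
    ∀ i ≤ m, coeff (R := R) i (f ^ e) = coeff (R := R) i (f' ^ e) := by
  induction e with
  | zero => simp
  | succ e ih =>
    rw [pow_succ, pow_succ]
    exact coeff_mul_congr ih hf

lemma map_Pp {S : Type*} [CommRing S] (φ : R →+* S) (k N : ℕ) :
    PowerSeries.map φ (Pp R k N) = Pp S k N := by
  simp [Pp, map_prod]

instance : CharP (PowerSeries (ZMod 7)) 7 :=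
  charP_of_injective_ringHom (f := C (R := (ZMod 7)))
    (fun a b h => by simpa using congrArg (constantCoeff (R := (ZMod 7))) h) 7

instance : Fact (Nat.Prime 7) := ⟨by norm_num⟩

lemma Pp_pow_seven (k N : ℕ) :
    (Pp (ZMod 7) k N) ^ 7 = Pp (ZMod 7) (7 * k) N := by
  rw [Pp, ← Finset.prod_pow]
  refine Finset.prod_congr rfl fun i _ => ?_
  rw [sub_pow_char, one_pow, ← pow_mul]
  congr 1
  ring

lemma key_dvd (m : ℕ) :
    (7 : ℤ) ∣ coeff (R := ℤ) m (Jz 14 * Jz 1 ^ 7 - 8 * (Jz 7 * Jz 2 ^ 7)) := by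
  set N := m + 1 with hN
  have h1 : ∀ i ≤ m, coeff (R := ℤ) i (Jz 14 * Jz 1 ^ 7) =
      coeff (R := ℤ) i (Pp ℤ 14 N * (Pp ℤ 1 N) ^ 7) :=
    coeff_mul_congr (fun i hi => Jz_coeff (by norm_num) (by omega))
      (coeff_pow_congr (fun i hi => Jz_coeff (by norm_num) (by omega)) 7)
  have h2 : ∀ i ≤ m, coeff (R := ℤ) i (Jz 7 * Jz 2 ^ 7) =
      coeff (R := ℤ) i (Pp ℤ 7 N * (Pp ℤ 2 N) ^ 7) :=
    coeff_mul_congr (fun i hi => Jz_coeff (by norm_num) (by omega))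
      (coeff_pow_congr (fun i hi => Jz_coeff (by norm_num) (by omega)) 7)
  have heq : coeff (R := ℤ) m (Jz 14 * Jz 1 ^ 7 - 8 * (Jz 7 * Jz 2 ^ 7)) =
      coeff (R := ℤ) m (Pp ℤ 14 N * (Pp ℤ 1 N) ^ 7 - 8 * (Pp ℤ 7 N * (Pp ℤ 2 N) ^ 7)) := by
    simp only [map_sub, h1 m le_rfl]
    congr 1
    have := coeff_mul_congr (f := (8 : PowerSeries ℤ)) (f' := (8 : PowerSeries ℤ))
      (m := m) (fun i _ => rfl) h2 m le_rfl
    simpa using this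
  rw [heq, show (7:ℤ) = ((7:ℕ):ℤ) by norm_num, ← ZMod.intCast_zmod_eq_zero_iff_dvd]
  have : ((coeff (R := ℤ) m (Pp ℤ 14 N * (Pp ℤ 1 N) ^ 7 - 8 * (Pp ℤ 7 N * (Pp ℤ 2 N) ^ 7)) : ℤ) : ZMod 7)
      = coeff (R := (ZMod 7)) m (PowerSeries.map (Int.castRingHom (ZMod 7))
        (Pp ℤ 14 N * (Pp ℤ 1 N) ^ 7 - 8 * (Pp ℤ 7 N * (Pp ℤ 2 N) ^ 7))) := by
    simp only [coeff_map, ← map_sub]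
    rfl
  rw [this]
  have hz : PowerSeries.map (Int.castRingHom (ZMod 7))
      (Pp ℤ 14 N * (Pp ℤ 1 N) ^ 7 - 8 * (Pp ℤ 7 N * (Pp ℤ 2 N) ^ 7)) = 0 := by
    simp only [map_sub, map_mul, map_pow, map_Pp, map_ofNat]
    rw [Pp_pow_seven, Pp_pow_seven]
    have h8 : (8 : PowerSeries (ZMod 7)) = 1 := by
      have : (8 : PowerSeries (ZMod 7)) = ((8 : ℕ) : PowerSeries (ZMod 7)) := by norm_num
      rw [this, ← map_natCast (C (R := (ZMod 7))) 8, show ((8:ℕ):ZMod 7) = 1 from rfl, map_one]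
    rw [h8, one_mul]
    ring
  rw [hz]
  simp

lemma Jz_const {k : ℕ} (hk : 1 ≤ k) : constantCoeff (R := ℤ) (Jz k) = 1 := by
  rw [← coeff_zero_eq_constantCoeff, Jz_coeff hk Nat.one_pos, Pp,
    Finset.prod_range_one, map_sub, coeff_zero_eq_constantCoeff]
  have hk0 : k ≠ 0 := by omega
  simp [hk0]

lemma map_Jz (k : ℕ) : PowerSeries.map (Int.castRingHom ℚ) (Jz k) = J k := by
  ext m
  rw [coeff_map, Jz, coeff_mk, J, coeff_mk,
    show (∏ n ∈ Finset.range (m + 1), (1 - (X : PowerSeries ℚ) ^ (k * (n + 1))))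
      = Pp ℚ k (m+1) from rfl, ← map_Pp (Int.castRingHom ℚ), coeff_map]

/-- Every coefficient of `J₁₄ J₁⁷ / (J₇ J₂⁷) - 8` is an integer divisible by `7`;
equivalently, `p₁ := (1/7)(J₁₄ J₁⁷/(J₇ J₂⁷) - 8)` has integer coefficients. -/
theorem p1_integrality (n : ℕ) :
    ∃ m : ℤ, PowerSeries.coeff (R := ℚ) n (J 14 * J 1 ^ 7 * (J 7 * J 2 ^ 7)⁻¹ - 8) = 7 * m := by
  set G : PowerSeries ℤ := Jz 7 * Jz 2 ^ 7 with hGdef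
  have hGu : IsUnit G := by
    rw [isUnit_iff_constantCoeff]
    simp [hGdef, Jz_const, map_mul, map_pow, Jz_const (by norm_num : (1:ℕ) ≤ 7),
      Jz_const (by norm_num : (1:ℕ) ≤ 2)]
  obtain ⟨u, hu⟩ := hGu
  set Ginv : PowerSeries ℤ := ↑u⁻¹ with hGinv
  have hGG : G * Ginv = 1 := by rw [← hu, hGinv]; exact_mod_cast u.mul_inv
  set φ := PowerSeries.map (Int.castRingHom ℚ) with hφ
  have hφGG : (J 7 * J 2 ^ 7) * φ Ginv = 1 := by
    have := congrArg φ hGG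
    rwa [map_mul, map_one, hGdef, map_mul, map_pow, map_Jz, map_Jz] at this
  have hc : constantCoeff (R := ℚ) (J 7 * J 2 ^ 7) ≠ 0 := by
    intro h
    have := congrArg (constantCoeff (R := ℚ)) hφGG
    rw [map_mul, h, zero_mul, map_one] at this
    exact zero_ne_one this
  have hinv : φ Ginv = (J 7 * J 2 ^ 7)⁻¹ :=
    (PowerSeries.eq_inv_iff_mul_eq_one hc).mpr (by rw [mul_comm]; exact hφGG)
  set D : PowerSeries ℤ := Jz 14 * Jz 1 ^ 7 - 8 * G with hD
  have hmain : J 14 * J 1 ^ 7 * (J 7 * J 2 ^ 7)⁻¹ - 8 = φ (D * Ginv) := by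
    rw [hD, sub_mul, mul_assoc 8, hGG, mul_one, map_sub, map_mul, map_mul, map_pow,
      map_Jz, map_Jz, hinv, map_ofNat]
  have hdvd : (7 : ℤ) ∣ coeff (R := ℤ) n (D * Ginv) := by
    rw [coeff_mul]
    exact Finset.dvd_sum fun p _ => dvd_mul_of_dvd_left (key_dvd p.1) _
  obtain ⟨m, hm⟩ := hdvd
  refine ⟨m, ?_⟩
  rw [hmain, hφ, coeff_map, hm, map_mul]
  simp [mul_comm]
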